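/- arXiv:2412.11723 — 2 statements merged into one kernel-verified Lean document; each statement's English description precedes it below -/
import Mathlib

section
/- Let Y be a finite scheme over a field k (i.e. Y = Spec B with B a finite-dimensional k-algebra) embedded as a closed subscheme of projective space ℙ^N_k. Then for every d ≥ dim_k B − 1, the restriction map H⁰(ℙ^N_k, O(d)) → H⁰(Y, O_Y(d)) is surjective. -/
/-!
Let `V ⊆ B` be the image of the linear forms; multiplicativity makes the image of the degree-`d`
forms equal to `V ^ d`, and surjectivity in large degree says `V` lies in no maximal ideal of `B`.
After base change to an algebraically closed (hence infinite) field, `V` therefore contains a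
unit `u`: a vector space over an infinite field is not a finite union of proper subspaces, and
the artinian ring `B` has finitely many maximal ideals. Replacing `V` by `u⁻¹ V` we may assume
`1 ∈ V`. Then `1 ⊆ V ⊆ V ^ 2 ⊆ ⋯` is constant as soon as two consecutive terms agree, and it
eventually equals `B`; so its dimension grows by at least one at each step until it reaches
`dim B`, which happens by degree `dim B - 1`.
-/

open Module

namespace Submodule

variable {K A : Type*} [Field K]

theorem span_singleton_mul_top_of_isUnit [Semiring A] [Algebra K A] {a : A} (ha : IsUnit a) :
    span K {a} * ⊤ = ⊤ := by
  obtain ⟨u, rfl⟩ := ha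
  refine eq_top_iff.2 fun x _ ↦ ?_
  rw [← u.mul_inv_cancel_left x]
  exact mul_mem_mul (mem_span_singleton_self _) mem_top

theorem exists_isUnit_mem_of_mul_top_eq_top [Infinite K] [CommRing A] [Algebra K A]
    [FiniteDimensional K A] {V : Submodule K A} (hV : V * ⊤ = ⊤) : ∃ u ∈ V, IsUnit u := by
  by_contra! hno
  have : IsArtinianRing A := isArtinian_of_tower K inferInstance
  have : Finite {I : Ideal A // I.IsMaximal} :=
    (IsArtinianRing.setOfPred_isMaximal_finite A).to_subtype
  have hcover : ⋃ I : {I : Ideal A // I.IsMaximal},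
      ((I.1.restrictScalars K).comap V.subtype : Set V) = Set.univ := by
    refine Set.eq_univ_of_forall fun x ↦ Set.mem_iUnion.2 ?_
    obtain ⟨I, hI, hxI⟩ := exists_max_ideal_of_mem_nonunits (hno x.1 x.2)
    exact ⟨⟨I, hI⟩, hxI⟩
  obtain ⟨⟨I, hI⟩, hVI⟩ := Subspace.exists_eq_top_of_iUnion_eq_univ hcover
  have hVle : V ≤ I.restrictScalars K := fun v hv ↦ by
    simpa using (hVI ▸ mem_top : (⟨v, hv⟩ : V) ∈ (I.restrictScalars K).comap V.subtype)
  refine hI.ne_top ((Ideal.eq_top_iff_one I).2 ?_)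
  have : (⊤ : Submodule K A) ≤ I.restrictScalars K :=
    hV ▸ mul_le.2 fun v hv b _ ↦ I.mul_mem_right b (hVle hv)
  exact this mem_top

theorem pow_eq_top_of_one_mem [Ring A] [Algebra K A] [FiniteDimensional K A]
    {W : Submodule K A} (h1 : 1 ∈ W) {n : ℕ} (hn : W ^ n = ⊤) {d : ℕ} (hd : finrank K A - 1 ≤ d) :
    W ^ d = ⊤ := by
  have hmono : Monotone (W ^ · : ℕ → Submodule K A) := fun _ _ ↦ pow_le_pow_right' (one_le.2 h1)
  have hstable : ∀ e, W ^ (e + 1) = W ^ e → W ^ e = ⊤ := by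
    intro e he
    have hconst : ∀ m, W ^ (e + m) = W ^ e := by
      intro m
      induction m with
      | zero => rfl
      | succ m ih => rw [← add_assoc, pow_succ, ih, ← pow_succ, he]
    exact top_le_iff.1 (hn ▸ hconst n ▸ hmono (Nat.le_add_left n e))
  have hgrow : ∀ e, W ^ e = ⊤ ∨ e + 1 ≤ finrank K ↥(W ^ e) := by
    intro e
    induction e with
    | zero =>
      rcases subsingleton_or_nontrivial A with _ | _
      · exact .inl (Subsingleton.elim _ _)
      · right
        rw [pow_zero, one_eq_span, finrank_span_singleton one_ne_zero]
    | succ e ih =>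
      by_cases htop : W ^ e = ⊤
      · exact .inl (top_le_iff.1 (htop ▸ hmono e.le_succ))
      have hlt : W ^ e < W ^ (e + 1) :=
        (hmono e.le_succ).lt_of_ne fun h ↦ htop (hstable e h.symm)
      have := finrank_lt_finrank_of_lt hlt
      have := ih.resolve_left htop
      omega
  rcases hgrow d with htop | hrank
  · exact htop
  · have := finrank_le (W ^ d : Submodule K A)
    exact eq_top_of_finrank_eq (by omega)

theorem pow_eq_top_of_infinite [Infinite K] [CommRing A] [Algebra K A] [FiniteDimensional K A]
    {V : Submodule K A} {n : ℕ} (hn : V ^ (n + 1) = ⊤) {d : ℕ} (hd : finrank K A - 1 ≤ d) :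
    V ^ d = ⊤ := by
  have hV : V * ⊤ = ⊤ := top_le_iff.1 <| calc
    ⊤ = V * V ^ n := hn ▸ pow_succ' V n
    _ ≤ V * ⊤ := mul_le_mul_right le_top V
  obtain ⟨_, haV, u, rfl⟩ := exists_isUnit_mem_of_mul_top_eq_top hV
  -- Rescaling by `u⁻¹` puts `1` into the subspace and does not change which powers are `⊤`.
  set W := spanSingleton K (↑u⁻¹ : A) * V
  have h1 : 1 ∈ W := u.inv_mul ▸ mul_mem_mul (mem_span_singleton_self _) haV
  have hW : W ^ d = ⊤ := by
    refine pow_eq_top_of_one_mem h1 (n := n + 1) ?_ hd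
    rw [mul_pow, hn, ← map_pow]
    exact span_singleton_mul_top_of_isUnit (u⁻¹.isUnit.pow _)
  calc V ^ d = (spanSingleton K (u : A) * W) ^ d := by
        rw [← mul_assoc, ← map_mul, u.mul_inv, map_one, one_mul]
    _ = span K {(u : A) ^ d} * ⊤ := by rw [mul_pow, hW, ← map_pow]; rfl
    _ = ⊤ := span_singleton_mul_top_of_isUnit (u.isUnit.pow d)

section baseChange

open TensorProduct

variable {R A : Type*} (S : Type*) [CommSemiring R] [CommSemiring S] [Algebra R S] [Semiring A]
  [Algebra R A]

theorem baseChange_one : (1 : Submodule R A).baseChange S = 1 := by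
  rw [one_eq_span, baseChange_span, Set.image_singleton, one_eq_span]
  rfl

theorem baseChange_mul (p q : Submodule R A) :
    (p * q).baseChange S = p.baseChange S * q.baseChange S := by
  have hmk : (TensorProduct.mk R S A 1 : A → S ⊗[R] A) = Algebra.TensorProduct.includeRight :=
    rfl
  rw [← p.span_eq, ← q.span_eq, span_mul_span, baseChange_span, baseChange_span, baseChange_span,
    span_mul_span, hmk, Set.image_mul]

theorem baseChange_pow (p : Submodule R A) (n : ℕ) :
    (p ^ n).baseChange S = p.baseChange S ^ n := by
  induction n with
  | zero => exact baseChange_one S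
  | succ n ih => rw [pow_succ, baseChange_mul, ih, pow_succ]

end baseChange

theorem pow_eq_top_of_pow_succ_eq_top [CommRing A] [Algebra K A] [FiniteDimensional K A]
    {V : Submodule K A} {n : ℕ} (hn : V ^ (n + 1) = ⊤) {d : ℕ} (hd : finrank K A - 1 ≤ d) :
    V ^ d = ⊤ := by
  let L := AlgebraicClosure K
  refine baseChange_injective (A := L) ?_
  rw [baseChange_pow, baseChange_top]
  refine pow_eq_top_of_infinite (n := n) ?_ (by rwa [finrank_baseChange])
  rw [← baseChange_pow, hn, baseChange_top]

end Submodule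

namespace MvPolynomial

open Submodule LinearMap

variable {σ R B : Type*} [CommSemiring R] [Semiring B] [Algebra R B]
  {res : ∀ d : ℕ, homogeneousSubmodule σ R d →ₗ[R] B}

theorem range_zero_eq_one (hone : res 0 ⟨1, isHomogeneous_one σ R⟩ = 1) : range (res 0) = 1 := by
  refine le_antisymm ?_ (one_le.2 ⟨_, hone⟩)
  rintro _ ⟨⟨F, hF⟩, rfl⟩
  obtain ⟨r, rfl⟩ := mem_one.1 (homogeneousSubmodule_zero (σ := σ) (R := R) ▸ hF)
  have hsmul : (⟨algebraMap R _ r, hF⟩ : homogeneousSubmodule σ R 0) =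
      r • ⟨1, isHomogeneous_one σ R⟩ :=
    Subtype.ext (Algebra.algebraMap_eq_smul_one r)
  rw [hsmul, map_smul, hone]
  exact mem_one.2 ⟨r, Algebra.algebraMap_eq_smul_one r⟩

theorem range_add_eq_mul (hmul : ∀ (d e : ℕ) (F : homogeneousSubmodule σ R d)
      (G : homogeneousSubmodule σ R e),
      res (d + e) ⟨F * G, homogeneousSubmodule_mul d e (mul_mem_mul F.2 G.2)⟩ = res d F * res e G)
    (d e : ℕ) : range (res (d + e)) = range (res d) * range (res e) := by
  refine le_antisymm ?_ (mul_le.2 ?_)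
  · suffices ∀ F (hF : F ∈ homogeneousSubmodule σ R d * homogeneousSubmodule σ R e),
        res (d + e) ⟨F, homogeneousSubmodule_mul d e hF⟩ ∈ range (res d) * range (res e) by
      rintro _ ⟨⟨F, hF⟩, rfl⟩
      rw [← homogeneousSubmodule_one_pow, pow_add, homogeneousSubmodule_one_pow,
        homogeneousSubmodule_one_pow] at hF
      exact this F hF
    intro F hF
    induction hF using Submodule.mul_induction_on' with
    | mem_mul_mem F hF G hG => exact hmul d e ⟨F, hF⟩ ⟨G, hG⟩ ▸ mul_mem_mul ⟨_, rfl⟩ ⟨_, rfl⟩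
    | add F hF G hG ihF ihG => exact (res (d + e)).map_add ⟨F, _⟩ ⟨G, _⟩ ▸ add_mem ihF ihG
  · rintro _ ⟨F, rfl⟩ _ ⟨G, rfl⟩
    exact ⟨_, hmul d e F G⟩

theorem range_eq_range_one_pow (hone : res 0 ⟨1, isHomogeneous_one σ R⟩ = 1)
    (hmul : ∀ (d e : ℕ) (F : homogeneousSubmodule σ R d) (G : homogeneousSubmodule σ R e),
      res (d + e) ⟨F * G, homogeneousSubmodule_mul d e (mul_mem_mul F.2 G.2)⟩ = res d F * res e G)
    (d : ℕ) : range (res d) = range (res 1) ^ d := by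
  induction d with
  | zero => exact range_zero_eq_one hone
  | succ d ih => rw [range_add_eq_mul hmul, ih, pow_succ]

end MvPolynomial

open MvPolynomial

/-- Let `Y = Spec B` be a finite scheme over a field `k` (`B` a finite-dimensional
`k`-algebra) embedded as a closed subscheme of `ℙ^N_k`.  We encode the embedding by the
system of restriction maps `res d : H⁰(ℙ^N, O(d)) → H⁰(Y, O_Y(d)) ≅ B` (after a choice
of trivialization of `O_Y(1)`): these are `k`-linear maps on the spaces of degree-`d`
homogeneous forms which are multiplicative, send `1` to `1`, and (since `Y ⊂ ℙ^N` is a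
closed subscheme, by Serre vanishing) are surjective for all sufficiently large `d`.
The conclusion (Poonen's Lemma 2.1) is that the restriction map is surjective for
every `d ≥ dim_k B − 1`. -/
theorem stmt10 (k : Type) [Field k] (B : Type) [CommRing B] [Algebra k B]
    [FiniteDimensional k B] (N : ℕ)
    (res : ∀ d : ℕ, (homogeneousSubmodule (Fin (N + 1)) k d) →ₗ[k] B)
    (hone : res 0 ⟨1, (mem_homogeneousSubmodule _ _).2 (isHomogeneous_one _ _)⟩ = 1)
    (hmul : ∀ (d e : ℕ) (F : homogeneousSubmodule (Fin (N + 1)) k d)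
      (G : homogeneousSubmodule (Fin (N + 1)) k e),
      res (d + e) ⟨(F : MvPolynomial (Fin (N + 1)) k) * (G : MvPolynomial (Fin (N + 1)) k),
        (mem_homogeneousSubmodule _ _).2
          (((mem_homogeneousSubmodule _ _).1 F.2).mul
            ((mem_homogeneousSubmodule _ _).1 G.2))⟩ = res d F * res e G)
    (hclosed : ∃ d₀ : ℕ, ∀ d ≥ d₀, Function.Surjective (res d)) :
    ∀ d : ℕ, Module.finrank k B - 1 ≤ d → Function.Surjective (res d) := by
  obtain ⟨d₀, hd₀⟩ := hclosed
  intro d hd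
  have hrange := range_eq_range_one_pow hone hmul
  rw [← LinearMap.range_eq_top, hrange]
  refine Submodule.pow_eq_top_of_pow_succ_eq_top (n := d₀) ?_ hd
  rw [← hrange, LinearMap.range_eq_top]
  exact hd₀ _ d₀.le_succ
end

section
/- Let X be an irreducible scheme, Z ⊂ X a closed subset, and S a finite set of points of Z. Let W be the semilocal scheme Spec O_{X,S}. If Z is local in W in the sense that W ∩ Z has a unique closed point x, and a finite morphism π: W → W' maps W ∩ Z bijectively onto its image with trivial residue extension at x and injectivity on the fiber over π(x), then π restricted to W ∩ Z is a closed immersion. -/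
/-!
Write `f = i ≫ π`, `y = f x` and `R = Γ(W')`. Since every point of `Z` specializes to `x`, the
germ map `Γ(Z) → 𝒪_{Z,x}` is an isomorphism, so it suffices that the finite map `R → 𝒪_{Z,x}` is
surjective. Its maximal ideal lies over the prime `p` of `y`, which is maximal by integrality, so
`R → κ(y)` is onto and the residue hypothesis gives `𝒪_{Z,x} = im R + 𝔪`, while unramifiedness
gives `𝔪 = p 𝒪_{Z,x}`. By lying over, `p` is the only maximal ideal of `R` containing the kernel
of `R → 𝒪_{Z,x}`, so Nakayama's lemma over the Jacobson radical of that kernel gives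
surjectivity, and `f` is a closed immersion of affine schemes.
-/

open AlgebraicGeometry CategoryTheory IsLocalRing

universe u

namespace IsLocalRing

variable {R S : Type*} [CommRing R] [CommRing S] [Algebra R S] [IsLocalRing S]

theorem comap_maximalIdeal_le_jacobson_ker [Algebra.IsIntegral R S] :
    (maximalIdeal S).comap (algebraMap R S) ≤ (RingHom.ker (algebraMap R S)).jacobson := by
  refine le_sInf fun M ⟨hker, hM⟩ => ?_
  obtain ⟨Q, hQ, rfl⟩ := Ideal.exists_ideal_over_maximal_of_isIntegral M hker
  rw [eq_maximalIdeal hQ]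

theorem algebraMap_surjective_of_le_map_comap_maximalIdeal [Module.Finite R S]
    (hm : maximalIdeal S ≤ ((maximalIdeal S).comap (algebraMap R S)).map (algebraMap R S))
    (hres : ∀ s : S, ∃ r : R, algebraMap R S r - s ∈ maximalIdeal S) :
    Function.Surjective (algebraMap R S) := by
  let N := LinearMap.range (Algebra.linearMap R S)
  have hcover : (⊤ : Submodule R S) ≤ N ⊔ (maximalIdeal S).comap (algebraMap R S) • ⊤ := by
    rintro s -
    obtain ⟨r, hr⟩ := hres s
    rw [← sub_sub_self (algebraMap R S r) s, Ideal.smul_top_eq_map]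
    exact Submodule.sub_mem _ (Submodule.mem_sup_left ⟨r, rfl⟩) (Submodule.mem_sup_right (hm hr))
  -- Nakayama with `J = ker (algebraMap R S)`, which annihilates `S`.
  have hN := Submodule.sup_eq_sup_smul_of_le_smul_of_le_jacobson Module.Finite.fg_top
    comap_maximalIdeal_le_jacobson_ker hcover
  rw [sup_top_eq, Ideal.smul_top_eq_map, (Ideal.map_eq_bot_iff_le_ker _).mpr le_rfl,
    Submodule.restrictScalars_bot, sup_bot_eq] at hN
  exact fun s => hN.le (Submodule.mem_top (x := s))

theorem _root_.IsLocalization.AtPrime.exists_algebraMap_sub_mem_maximalIdeal {Rₚ : Type*}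
    [CommRing Rₚ] [Algebra R Rₚ] [IsLocalRing Rₚ] (p : Ideal R) [p.IsMaximal]
    [IsLocalization.AtPrime Rₚ p] (t : Rₚ) :
    ∃ r : R, algebraMap R Rₚ r - t ∈ maximalIdeal Rₚ := by
  let e := IsLocalization.AtPrime.equivQuotMaximalIdeal p Rₚ
  obtain ⟨r, hr⟩ := Ideal.Quotient.mk_surjective (e.symm (Ideal.Quotient.mk _ t))
  refine ⟨r, Ideal.Quotient.eq.mp ?_⟩
  change e (Ideal.Quotient.mk p r) = _
  rw [hr, e.apply_symm_apply]

theorem algebraMap_surjective_of_factors_through_localization {Rₚ : Type*} [CommRing Rₚ]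
    [Algebra R Rₚ] [IsLocalRing Rₚ] (p : Ideal R) [p.IsPrime] [IsLocalization.AtPrime Rₚ p]
    [Module.Finite R S] (ψ : Rₚ →+* S) [IsLocalHom ψ]
    (hψ : ψ.comp (algebraMap R Rₚ) = algebraMap R S)
    (hunram : (maximalIdeal Rₚ).map ψ = maximalIdeal S)
    (hres : Function.Surjective (ResidueField.map ψ)) :
    Function.Surjective (algebraMap R S) := by
  have hp : (maximalIdeal S).comap (algebraMap R S) = p := by
    rw [← hψ, ← Ideal.comap_comap, maximalIdeal_comap]
    exact IsLocalization.AtPrime.under_maximalIdeal Rₚ p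
  have : p.IsMaximal := hp ▸ Ideal.isMaximal_comap_of_isIntegral_of_isMaximal (maximalIdeal S)
  refine algebraMap_surjective_of_le_map_comap_maximalIdeal ?_ fun s => ?_
  · rw [hp, ← hunram, ← IsLocalization.AtPrime.map_eq_maximalIdeal p Rₚ, Ideal.map_map, hψ]
  · obtain ⟨t, ht⟩ := hres (residue S s)
    obtain ⟨t, rfl⟩ := residue_surjective t
    obtain ⟨r, hr⟩ := IsLocalization.AtPrime.exists_algebraMap_sub_mem_maximalIdeal p t
    rw [ResidueField.map_residue, ← sub_eq_zero, ← map_sub, residue_eq_zero_iff] at ht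
    refine ⟨r, ?_⟩
    rw [← hψ, RingHom.comp_apply, ← sub_add_sub_cancel _ (ψ t), ← map_sub]
    exact add_mem (map_nonunit ψ _ hr) ht

end IsLocalRing

theorem TopologicalSpace.Opens.eq_top_of_forall_specializes {X : Type*} [TopologicalSpace X]
    {x : X} (hx : ∀ z : X, z ⤳ x) {U : TopologicalSpace.Opens X} (hxU : x ∈ U) : U = ⊤ :=
  eq_top_iff.mpr fun z _ => (hx z).mem_open U.isOpen hxU

namespace AlgebraicGeometry.Scheme

theorem germ_top_bijective_of_forall_specializes (X : Scheme) {x : X} (hx : ∀ z : X, z ⤳ x) :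
    Function.Bijective (X.presheaf.germ ⊤ x trivial) := by
  constructor
  · intro s t hst
    obtain ⟨U, hxU, iU, iV, h⟩ := X.presheaf.germ_eq (U := ⊤) (V := ⊤) x trivial trivial s t hst
    obtain rfl := TopologicalSpace.Opens.eq_top_of_forall_specializes hx hxU
    simpa [Subsingleton.elim iU (𝟙 _), Subsingleton.elim iV (𝟙 _)] using h
  · intro t
    obtain ⟨U, hxU, s, rfl⟩ := X.presheaf.exists_germ_eq t
    obtain rfl := TopologicalSpace.Opens.eq_top_of_forall_specializes hx hxU
    exact ⟨s, rfl⟩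

theorem Hom.map_maximalIdeal_stalkMap_comp {X Y T : Scheme} (f : X ⟶ Y) (g : Y ⟶ T) (x : X)
    (hf : Function.Surjective (f.stalkMap x))
    (hg : (maximalIdeal (T.presheaf.stalk (g (f x)))).map (g.stalkMap (f x)).hom =
      maximalIdeal (Y.presheaf.stalk (f x))) :
    (maximalIdeal (T.presheaf.stalk (g (f x)))).map ((f ≫ g).stalkMap x).hom =
      maximalIdeal (X.presheaf.stalk x) := by
  rw [Scheme.Hom.stalkMap_comp]
  exact (Ideal.map_map (g.stalkMap (f x)).hom (f.stalkMap x).hom).symm.trans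
    (by rw [hg, map_maximalIdeal_of_surjective _ hf])

theorem Hom.appTop_surjective_of_forall_specializes {X Y : Scheme} [IsAffine Y] (f : X ⟶ Y)
    [IsFinite f] (x : X) (hx : ∀ z : X, z ⤳ x)
    (hunram : (maximalIdeal (Y.presheaf.stalk (f x))).map (f.stalkMap x).hom =
      maximalIdeal (X.presheaf.stalk x))
    (hres : Function.Surjective (f.residueFieldMap x)) :
    Function.Surjective f.appTop := by
  have hgerm := X.germ_top_bijective_of_forall_specializes hx
  let := (f.appTop ≫ X.presheaf.germ ⊤ x trivial).hom.toAlgebra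
  have : Module.Finite Γ(Y, ⊤) (X.presheaf.stalk x) :=
    (RingHom.Finite.of_surjective _ hgerm.2).comp f.finite_appTop
  let y : (⊤ : Y.Opens) := ⟨f x, trivial⟩
  let := TopCat.Presheaf.algebra_section_stalk Y.presheaf y
  have := (isAffineOpen_top Y).isLocalization_stalk y
  have hsurj := algebraMap_surjective_of_factors_through_localization
    ((isAffineOpen_top Y).primeIdealOf y).asIdeal (f.stalkMap x).hom
    (RingHom.ext fun a => f.germ_stalkMap_apply ⊤ x trivial a) hunram hres
  intro s
  obtain ⟨a, ha⟩ := hsurj (X.presheaf.germ ⊤ x trivial s)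
  exact ⟨a, hgerm.1 ha⟩

end AlgebraicGeometry.Scheme

theorem stmt14_general (W W' Z : Scheme.{u}) [IsAffine W']
    (π : W ⟶ W') [IsFinite π]
    (i : Z ⟶ W) [IsClosedImmersion i]
    (x : Z) (hx : ∀ z : Z, x ∈ closure {z})
    (hres : Function.Bijective ((i ≫ π).residueFieldMap x))
    (hunram : (IsLocalRing.maximalIdeal
        (W'.presheaf.stalk (π.base (i.base x)))).map (π.stalkMap (i.base x)).hom =
      IsLocalRing.maximalIdeal (W.presheaf.stalk (i.base x))) :
    IsClosedImmersion (i ≫ π) := by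
  have : IsAffine Z := isAffine_of_isAffineHom (i ≫ π)
  exact .of_surjective_of_isAffine _ <| (i ≫ π).appTop_surjective_of_forall_specializes x
    (fun z => specializes_iff_mem_closure.mpr (hx z))
    (i.map_maximalIdeal_stalkMap_comp π x (i.stalkMap_surjective x) hunram) hres.2

/-- The Step-5 argument of the paper.  Let `π : W → W'` be a finite morphism of affine
Noetherian schemes (`W` a semilocal scheme `Spec O_{X,S}`), and `Z ⊂ W` a closed
subscheme (given by a closed immersion `i : Z → W`) which is local, i.e. has a unique
closed point `x` (every point of `Z` specializes to `x`).  Suppose `π` maps `Z`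
injectively into `W'`, `x` is the only point of `Z` in the fiber of `π` over
`y = π(x)`, the residue field extension `k(y) → k(x)` is trivial, and `π` is
unramified at `x` (the maximal ideal of `O_{W',y}` generates that of `O_{W,x}`).
Then `π` restricted to `Z` is a closed immersion (onto its image `S = π(Z)`). -/
theorem stmt14 (W W' Z : Scheme.{u}) [IsAffine W] [IsAffine W']
    [IsNoetherian W] [IsNoetherian W']
    (π : W ⟶ W') [IsFinite π]
    (i : Z ⟶ W) [IsClosedImmersion i]
    (x : Z) (hx : ∀ z : Z, x ∈ closure {z})
    (hinj : Function.Injective (⇑π.base ∘ ⇑i.base))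
    (hfiber : ∀ z : Z, π.base (i.base z) = π.base (i.base x) → z = x)
    (hres : Function.Bijective ((i ≫ π).residueFieldMap x))
    (hunram : (IsLocalRing.maximalIdeal
        (W'.presheaf.stalk (π.base (i.base x)))).map (π.stalkMap (i.base x)).hom =
      IsLocalRing.maximalIdeal (W.presheaf.stalk (i.base x))) :
    IsClosedImmersion (i ≫ π) :=
  stmt14_general W W' Z π i x hx hres hunram
end
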